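/- For fixed x ≥ 0 and n > 2x, the number of ranked unlabeled tree shapes with n+2 leaves whose root splits into subtrees with x+1 and n−x+1 leaves equals binomial(n, x)·e_x·e_{n−x}, where e_i = R_{i+1} is the number of ranked unlabeled tree shapes with i internal nodes. -/

import Mathlib

/-- A binary perfect phylogeny: a rooted binary tree with positive integer leaf labels
(leaf counts). -/
inductive PP : Type
  | leaf : ℕ → PP
  | node : PP → PP → PP
deriving DecidableEq

namespace PP

/-- Total number of samples of a binary perfect phylogeny. -/
def size : PP → ℕ
  | leaf n => n
  | node l r => l.size + r.size

/-- One elementary coarsening step: collapsing a cherry (two pendant leaf edges into a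
single leaf carrying the sum of the counts), anywhere in the tree; children are unordered. -/
inductive Step : PP → PP → Prop
  | cherry (a b : ℕ) : Step (node (leaf a) (leaf b)) (leaf (a + b))
  | swap (s t : PP) : Step (node s t) (node t s)
  | left {t t' : PP} (s : PP) : Step t t' → Step (node t s) (node t' s)
  | right {t t' : PP} (s : PP) : Step t t' → Step (node s t) (node s t')

/-- `π.Refines σ` (written `π ≤ σ` in the paper) iff `σ` is obtained from `π` by
sequentially collapsing cherries. -/
def Refines (π σ : PP) : Prop := Relation.ReflTransGen Step π σ

end PP

/-- An unranked unlabeled rooted binary tree (with ordered children; unordered tree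
shapes are obtained as the quotient by `Shape.Equiv`). -/
inductive Shape : Type
  | leaf : Shape
  | node : Shape → Shape → Shape

namespace Shape

/-- Number of leaves. -/
def leaves : Shape → ℕ
  | leaf => 1
  | node l r => l.leaves + r.leaves

/-- Equality of rooted binary trees as unordered (unlabeled) tree shapes. -/
inductive Equiv : Shape → Shape → Prop
  | leaf : Equiv leaf leaf
  | node {a b c d : Shape} : Equiv a c → Equiv b d → Equiv (node a b) (node c d)
  | swap {a b c d : Shape} : Equiv a d → Equiv b c → Equiv (node a b) (node c d)

/-- The perfect phylogeny `P(T)` obtained from a tree shape by assigning count 1 to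
every leaf. -/
def toPP : Shape → PP
  | leaf => PP.leaf 1
  | node l r => PP.node l.toPP r.toPP

end Shape

/-- `shapeCount n` is the number of unranked unlabeled binary tree shapes with `n`
leaves (the `n`-th Wedderburn–Etherington number). -/
noncomputable def shapeCount (n : ℕ) : ℕ :=
  Nat.card {q : Quot Shape.Equiv // ∃ t : Shape, Quot.mk _ t = q ∧ t.leaves = n}

/-- `Gc π` is the number of unranked unlabeled tree shapes compatible with the binary
perfect phylogeny `π`, i.e. whose associated perfect phylogeny refines `π`. -/
noncomputable def Gc (π : PP) : ℕ :=
  Nat.card {q : Quot Shape.Equiv //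
    ∃ t : Shape, Quot.mk _ t = q ∧ PP.Refines t.toPP π}

/-- A rooted binary unlabeled tree with ranks attached to internal nodes (ordered
children; ranked unlabeled tree shapes are the quotient by `RTree.Equiv`). -/
inductive RTree : Type
  | leaf : RTree
  | node : ℕ → RTree → RTree → RTree

namespace RTree

/-- Number of leaves. -/
def leaves : RTree → ℕ
  | leaf => 1
  | node _ l r => l.leaves + r.leaves

/-- Multiset of internal node ranks. -/
def ranks : RTree → Multiset ℕ
  | leaf => 0
  | node k l r => k ::ₘ (l.ranks + r.ranks)

/-- Ranks strictly increase away from the root, starting above the bound `b`. -/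
def IncreasingFrom : ℕ → RTree → Prop
  | _, leaf => True
  | b, node k l r => b < k ∧ IncreasingFrom k l ∧ IncreasingFrom k r

/-- `t.Valid n`: `t` is a ranked tree with `n` leaves whose internal nodes carry the
ranks `1, …, n-1`, each exactly once, totally ordered consistently with the tree
(ranks increase from the root toward the leaves). -/
def Valid (t : RTree) (n : ℕ) : Prop :=
  t.leaves = n ∧ t.ranks = (Finset.Icc 1 (n - 1)).val ∧ IncreasingFrom 0 t

/-- Forget the ranking. -/
def shape : RTree → Shape
  | leaf => Shape.leaf
  | node _ l r => Shape.node l.shape r.shape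

/-- Equality of ranked trees as unordered (unlabeled) ranked tree shapes. -/
inductive Equiv : RTree → RTree → Prop
  | leaf : Equiv leaf leaf
  | node {k : ℕ} {a b c d : RTree} :
      Equiv a c → Equiv b d → Equiv (node k a b) (node k c d)
  | swap {k : ℕ} {a b c d : RTree} :
      Equiv a d → Equiv b c → Equiv (node k a b) (node k c d)

end RTree

/-- `rankedCount n` is the number of ranked unlabeled tree shapes with `n` leaves
(the `(n-1)`-th Euler zigzag number `R_n`). -/
noncomputable def rankedCount (n : ℕ) : ℕ :=
  Nat.card {q : Quot RTree.Equiv // ∃ t : RTree, Quot.mk _ t = q ∧ t.Valid n}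

/-- `GTc π` is the number of ranked unlabeled tree shapes compatible with the binary
perfect phylogeny `π`: ranked tree shapes on `π.size` leaves whose underlying unranked
shape is compatible with `π`. -/
noncomputable def GTc (π : PP) : ℕ :=
  Nat.card {q : Quot RTree.Equiv //
    ∃ t : RTree, Quot.mk _ t = q ∧ t.Valid π.size ∧ PP.Refines t.shape.toPP π}

/-- `t` splits at the root into subtrees with `a` and `b` leaves (in either order). -/
def RTree.splitsInto : RTree → ℕ → ℕ → Prop
  | .leaf, _, _ => False
  | .node _ l r, a, b => (l.leaves = a ∧ r.leaves = b) ∨ (l.leaves = b ∧ r.leaves = a)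

/-!
The root of a valid ranked tree carries rank 1, so deleting it leaves two increasingly ranked
subtrees whose rank sets `S` and `T \ S` partition `T = {2, …, n + 1}`. Relabelling each subtree
order-preservingly onto `{1, …, #S}` resp. `{1, …, #(T \ S)}` identifies the ranked shapes in
question with triples (`S`, left shape, right shape), where `S` is one of the `C(n, x)` subsets of
`T` of size `x`. Since the two subtrees have different numbers of leaves, swapping the children of
the root never identifies two such triples.
-/

open Finset

namespace Finset

/-- The `i`-th smallest element of `S` and, inversely, the position of `r` in `S`, both counted
from 1; they are order isomorphisms between `Icc 1 #S` and `S`, with junk values elsewhere. -/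
noncomputable def enumOf (S : Finset ℕ) (i : ℕ) : ℕ := Nat.nth (· ∈ S) (i - 1)

noncomputable def indexIn (S : Finset ℕ) (r : ℕ) : ℕ := Nat.count (· ∈ S) r + 1

variable (S : Finset ℕ)

private lemma card_finite_toSet_toFinset : #S.finite_toSet.toFinset = #S := by
  rw [finite_toSet_toFinset]

lemma mapsTo_indexIn : Set.MapsTo (indexIn S) S (Icc 1 #S) := fun r hr => by
  have : Nat.count (· ∈ S) r < #S := card_finite_toSet_toFinset S ▸ Nat.count_lt_card S.finite_toSet hr
  simp only [coe_Icc, Set.mem_Icc, indexIn]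
  omega

lemma mapsTo_enumOf : Set.MapsTo (enumOf S) (Icc 1 #S) S := fun i hi => by
  simp only [coe_Icc, Set.mem_Icc] at hi
  exact Nat.nth_mem_of_lt_card S.finite_toSet (by rw [card_finite_toSet_toFinset]; omega)

lemma invOn_indexIn_enumOf : Set.InvOn (indexIn S) (enumOf S) (Icc 1 #S) S := by
  constructor
  · intro i hi
    simp only [coe_Icc, Set.mem_Icc] at hi
    rw [indexIn, enumOf, Nat.count_nth_of_lt_card_finite (p := (· ∈ S)) S.finite_toSet
      (by rw [card_finite_toSet_toFinset]; omega)]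
    omega
  · intro r hr
    simp [enumOf, indexIn, Nat.nth_count (p := (· ∈ S)) hr]

lemma strictMonoOn_indexIn : StrictMonoOn (indexIn S) S := fun a ha b _ hab => by
  simpa [indexIn] using Nat.count_strict_mono (p := (· ∈ S)) ha hab

lemma strictMonoOn_enumOf : StrictMonoOn (enumOf S) (Icc 1 #S) := fun a ha b hb hab => by
  simp only [coe_Icc, Set.mem_Icc] at ha hb
  exact Nat.nth_lt_nth_of_lt_card S.finite_toSet (by omega) (by rw [card_finite_toSet_toFinset]; omega)

end Finset

namespace RTree

def map (f : ℕ → ℕ) : RTree → RTree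
  | leaf => leaf
  | node k l r => node (f k) (l.map f) (r.map f)

@[simp] lemma leaves_map (f : ℕ → ℕ) : ∀ t : RTree, (t.map f).leaves = t.leaves
  | leaf => rfl
  | node _ l r => by simp [map, leaves, leaves_map f l, leaves_map f r]

@[simp] lemma ranks_map (f : ℕ → ℕ) : ∀ t : RTree, (t.map f).ranks = t.ranks.map f
  | leaf => rfl
  | node _ l r => by simp [map, ranks, ranks_map f l, ranks_map f r]

lemma map_map (f g : ℕ → ℕ) : ∀ t : RTree, (t.map f).map g = t.map (g ∘ f)
  | leaf => rfl
  | node _ l r => by simp [map, map_map f g l, map_map f g r]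

lemma map_eq_self {f : ℕ → ℕ} : ∀ {t : RTree}, (∀ r ∈ t.ranks, f r = r) → t.map f = t
  | leaf, _ => rfl
  | node k l r, h => by
    simp only [ranks, Multiset.mem_cons, Multiset.mem_add] at h
    rw [map, h k (.inl rfl), map_eq_self fun a ha => h a (.inr (.inl ha)),
      map_eq_self fun a ha => h a (.inr (.inr ha))]

lemma ranks_map_of_bijOn {f : ℕ → ℕ} {A B : Finset ℕ} (hf : Set.BijOn f A B) {t : RTree}
    (ht : t.ranks = A.val) : (t.map f).ranks = B.val := by
  have hB : A.image f = B := Finset.coe_injective (by rw [Finset.coe_image, hf.image_eq])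
  rw [ranks_map, ht, ← Finset.image_val_of_injOn hf.injOn, hB]

lemma lt_of_mem_ranks : ∀ {t : RTree} {b r : ℕ}, IncreasingFrom b t → r ∈ t.ranks → b < r
  | leaf, _, _, _, hr => by simp [ranks] at hr
  | node _ _ _, _, _, ⟨hk, hl, hr⟩, hmem => by
    simp only [ranks, Multiset.mem_cons, Multiset.mem_add] at hmem
    rcases hmem with rfl | hmem | hmem
    · exact hk
    · exact hk.trans (lt_of_mem_ranks hl hmem)
    · exact hk.trans (lt_of_mem_ranks hr hmem)

lemma IncreasingFrom.map {f : ℕ → ℕ} {D : Set ℕ} (hf : StrictMonoOn f D) :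
    ∀ {t : RTree} {b c : ℕ}, IncreasingFrom b t → (∀ r ∈ t.ranks, r ∈ D) →
      (∀ r ∈ t.ranks, c < f r) → IncreasingFrom c (t.map f)
  | leaf, _, _, _, _, _ => trivial
  | node k l r, _, _, ⟨_, hl, hr⟩, hD, hc => by
    simp only [ranks, Multiset.mem_cons, Multiset.mem_add, forall_eq_or_imp] at hD hc
    refine ⟨hc.1, hl.map hf (fun a ha => hD.2 a (.inl ha)) fun a ha => ?_,
      hr.map hf (fun a ha => hD.2 a (.inr ha)) fun a ha => ?_⟩
    · exact hf hD.1 (hD.2 a (.inl ha)) (lt_of_mem_ranks hl ha)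
    · exact hf hD.1 (hD.2 a (.inr ha)) (lt_of_mem_ranks hr ha)

namespace Equiv

protected lemma refl : ∀ t : RTree, Equiv t t
  | .leaf => .leaf
  | .node _ l r => .node (Equiv.refl l) (Equiv.refl r)

protected lemma symm {a b : RTree} (h : Equiv a b) : Equiv b a := by
  induction h with
  | leaf => exact .leaf
  | node _ _ ih₁ ih₂ => exact .node ih₁ ih₂
  | swap _ _ ih₁ ih₂ => exact .swap ih₂ ih₁

protected lemma trans {a b c : RTree} (h₁ : Equiv a b) (h₂ : Equiv b c) : Equiv a c := by
  induction h₁ generalizing c with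
  | leaf => exact h₂
  | node _ _ ih₁ ih₂ =>
    cases h₂ with
    | node h₃ h₄ => exact .node (ih₁ h₃) (ih₂ h₄)
    | swap h₃ h₄ => exact .swap (ih₁ h₃) (ih₂ h₄)
  | swap _ _ ih₁ ih₂ =>
    cases h₂ with
    | node h₃ h₄ => exact .swap (ih₁ h₄) (ih₂ h₃)
    | swap h₃ h₄ => exact .node (ih₁ h₄) (ih₂ h₃)

lemma equivalence : Equivalence Equiv := ⟨Equiv.refl, Equiv.symm, Equiv.trans⟩

lemma map {a b : RTree} (f : ℕ → ℕ) (h : Equiv a b) : Equiv (a.map f) (b.map f) := by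
  induction h with
  | leaf => exact .leaf
  | node _ _ ih₁ ih₂ => exact .node ih₁ ih₂
  | swap _ _ ih₁ ih₂ => exact .swap ih₁ ih₂

lemma leaves_eq {a b : RTree} (h : Equiv a b) : a.leaves = b.leaves := by
  induction h with
  | leaf => rfl
  | node _ _ ih₁ ih₂ => simp [RTree.leaves, ih₁, ih₂]
  | swap _ _ ih₁ ih₂ => simp [RTree.leaves, ih₁, ih₂, add_comm]

lemma ranks_eq {a b : RTree} (h : Equiv a b) : a.ranks = b.ranks := by
  induction h with
  | leaf => rfl
  | node _ _ ih₁ ih₂ => simp [RTree.ranks, ih₁, ih₂]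
  | swap _ _ ih₁ ih₂ => simp [RTree.ranks, ih₁, ih₂, add_comm]

end Equiv

lemma mk_eq_mk_iff {a b : RTree} : Quot.mk Equiv a = Quot.mk Equiv b ↔ Equiv a b := by
  rw [Quot.eq, Equiv.equivalence.eqvGen_iff]

lemma card_ranks_add_one : ∀ t : RTree, Multiset.card t.ranks + 1 = t.leaves
  | leaf => rfl
  | node _ l r => by
    simp only [ranks, leaves, Multiset.card_cons, Multiset.card_add, ← card_ranks_add_one l,
      ← card_ranks_add_one r]
    ring

lemma valid_add_one_iff {t : RTree} {m : ℕ} :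
    t.Valid (m + 1) ↔ t.leaves = m + 1 ∧ t.ranks = (Icc 1 m).val ∧ IncreasingFrom 0 t :=
  Iff.rfl

lemma Valid.swap {k n : ℕ} {l r : RTree} (h : (node k l r).Valid n) : (node k r l).Valid n := by
  obtain ⟨hleaves, hranks, hk, hl, hr⟩ := h
  exact ⟨by rw [← hleaves, leaves, leaves, add_comm], by rw [← hranks, ranks, ranks, add_comm],
    hk, hr, hl⟩

lemma Valid.root_eq_one {k m : ℕ} {l r : RTree} (h : (node k l r).Valid (m + 2)) : k = 1 := by
  obtain ⟨-, hranks, hk, hl, hr⟩ := h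
  have h1 : 1 ∈ (node k l r).ranks := by simp [hranks]
  simp only [ranks, Multiset.mem_cons, Multiset.mem_add] at h1
  rcases h1 with h1 | h1 | h1
  · exact h1.symm
  · exact absurd (lt_of_mem_ranks hl h1) (by omega)
  · exact absurd (lt_of_mem_ranks hr h1) (by omega)

section Relabel

variable {S : Finset ℕ} {t : RTree}

lemma ranks_map_enumOf (ht : t.ranks = (Icc 1 #S).val) : (t.map S.enumOf).ranks = S.val :=
  ranks_map_of_bijOn (S.invOn_indexIn_enumOf.bijOn S.mapsTo_enumOf S.mapsTo_indexIn) ht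

lemma ranks_map_indexIn (ht : t.ranks = S.val) : (t.map S.indexIn).ranks = (Icc 1 #S).val :=
  ranks_map_of_bijOn (S.invOn_indexIn_enumOf.symm.bijOn S.mapsTo_indexIn S.mapsTo_enumOf) ht

lemma map_indexIn_map_enumOf (ht : t.ranks = (Icc 1 #S).val) :
    (t.map S.enumOf).map S.indexIn = t := by
  rw [map_map]
  exact map_eq_self fun r hr => S.invOn_indexIn_enumOf.1 (by simpa [ht] using hr)

lemma map_enumOf_map_indexIn (ht : t.ranks = S.val) : (t.map S.indexIn).map S.enumOf = t := by
  rw [map_map]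
  exact map_eq_self fun r hr => S.invOn_indexIn_enumOf.2 (by simpa [ht] using hr)

lemma IncreasingFrom.map_enumOf {b c : ℕ} (h : IncreasingFrom b t)
    (ht : t.ranks = (Icc 1 #S).val) (hc : ∀ s ∈ S, c < s) : IncreasingFrom c (t.map S.enumOf) :=
  have hmem : ∀ r ∈ t.ranks, r ∈ (Icc 1 #S : Set ℕ) := fun r hr => by simpa [ht] using hr
  h.map S.strictMonoOn_enumOf hmem fun r hr => hc _ (S.mapsTo_enumOf (hmem r hr))

lemma IncreasingFrom.map_indexIn {b : ℕ} (h : IncreasingFrom b t) (ht : t.ranks = S.val) :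
    IncreasingFrom 0 (t.map S.indexIn) :=
  h.map S.strictMonoOn_indexIn (fun r hr => by simpa [ht] using hr) fun r hr => by
    simp [indexIn]

lemma Equiv.of_map_enumOf {u u' : RTree} (h : Equiv (u.map S.enumOf) (u'.map S.enumOf))
    (hu : u.ranks = (Icc 1 #S).val) (hu' : u'.ranks = (Icc 1 #S).val) : Equiv u u' := by
  rw [← map_indexIn_map_enumOf hu, ← map_indexIn_map_enumOf hu']
  exact h.map _

end Relabel

noncomputable def join (T S : Finset ℕ) (u v : RTree) : RTree :=
  node 1 (u.map S.enumOf) (v.map (T \ S).enumOf)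

lemma Equiv.join {T S : Finset ℕ} {u u' v v' : RTree} (hu : Equiv u u') (hv : Equiv v v') :
    Equiv (join T S u v) (join T S u' v') :=
  .node (hu.map _) (hv.map _)

lemma eq_of_join_equiv_join {T S S' : Finset ℕ} {u u' v v' : RTree}
    (h : Equiv (join T S u v) (join T S' u' v')) (hne : u.leaves ≠ v'.leaves)
    (hu : u.ranks = (Icc 1 #S).val) (hu' : u'.ranks = (Icc 1 #S').val)
    (hv : v.ranks = (Icc 1 #(T \ S)).val) (hv' : v'.ranks = (Icc 1 #(T \ S')).val) :
    S = S' ∧ Equiv u u' ∧ Equiv v v' := by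
  cases h with
  | swap h₁ _ => exact absurd (by simpa using h₁.leaves_eq) hne
  | node h₁ h₂ =>
    obtain rfl : S = S' := Finset.val_injective <| by
      rw [← ranks_map_enumOf hu, ← ranks_map_enumOf hu', h₁.ranks_eq]
    exact ⟨rfl, h₁.of_map_enumOf hu hu', h₂.of_map_enumOf hv hv'⟩

variable {i j : ℕ}

lemma ranks_eq_Icc_card_of_valid {S : Finset ℕ} (hS : S ∈ (Ioc 1 (i + j + 1)).powersetCard i)
    {u v : RTree} (hu : u.Valid (i + 1)) (hv : v.Valid (j + 1)) :
    u.ranks = (Icc 1 #S).val ∧ v.ranks = (Icc 1 #(Ioc 1 (i + j + 1) \ S)).val := by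
  obtain ⟨hST, hScard⟩ := mem_powersetCard.1 hS
  have hcompl : #(Ioc 1 (i + j + 1) \ S) = j := by
    rw [card_sdiff_of_subset hST, Nat.card_Ioc, hScard]
    omega
  exact ⟨by rw [hScard]; exact hu.2.1, by rw [hcompl]; exact hv.2.1⟩

lemma join_valid {S : Finset ℕ} (hS : S ∈ (Ioc 1 (i + j + 1)).powersetCard i) {u v : RTree}
    (hu : u.Valid (i + 1)) (hv : v.Valid (j + 1)) :
    (join (Ioc 1 (i + j + 1)) S u v).Valid (i + j + 2) ∧
      (join (Ioc 1 (i + j + 1)) S u v).splitsInto (i + 1) (j + 1) := by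
  set T := Ioc 1 (i + j + 1)
  have hST : S ⊆ T := (mem_powersetCard.1 hS).1
  obtain ⟨hur, hvr⟩ := ranks_eq_Icc_card_of_valid hS hu hv
  have hT : ∀ s ∈ T, 1 < s := fun s hs => (mem_Ioc.1 hs).1
  refine ⟨⟨?_, ?_, Nat.one_pos, hu.2.2.map_enumOf hur fun s hs => hT s (hST hs),
    hv.2.2.map_enumOf hvr fun s hs => hT s (sdiff_subset hs)⟩, .inl ⟨?_, ?_⟩⟩
  · simp only [join, leaves, leaves_map, hu.1, hv.1]
    ring
  · rw [join, ranks, ranks_map_enumOf hur, ranks_map_enumOf hvr, sdiff_val,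
      add_tsub_cancel_of_le (val_le_iff.2 hST), show i + j + 2 - 1 = i + j + 1 by omega,
      Icc_eq_cons_Ioc (by omega), cons_val]
  · simp [hu.1]
  · simp [hv.1]

lemma exists_join_eq {l r : RTree} (h : (node 1 l r).Valid (i + j + 2))
    (hl : l.leaves = i + 1) (hr : r.leaves = j + 1) :
    ∃ S ∈ (Ioc 1 (i + j + 1)).powersetCard i, ∃ u v : RTree, u.Valid (i + 1) ∧
      v.Valid (j + 1) ∧ join (Ioc 1 (i + j + 1)) S u v = node 1 l r := by
  set T := Ioc 1 (i + j + 1)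
  obtain ⟨-, hranks, -, hil, hir⟩ := h
  rw [show i + j + 2 - 1 = i + j + 1 by omega, Icc_eq_cons_Ioc (by omega), cons_val] at hranks
  have hsum : l.ranks + r.ranks = T.val := (Multiset.cons_inj_right 1).1 hranks
  have hle : l.ranks ≤ T.val := hsum ▸ Multiset.le_add_right _ _
  let S : Finset ℕ := ⟨l.ranks, Multiset.nodup_of_le hle T.nodup⟩
  have hcompl : r.ranks = (T \ S).val := by
    rw [sdiff_val, ← hsum]
    exact (add_tsub_cancel_left _ _).symm
  have hScard : #S = i := Nat.add_right_cancel ((card_ranks_add_one l).trans hl)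
  have hcomplcard : #(T \ S) = j := by
    rw [← Nat.add_right_cancel_iff, card_def, ← hcompl, card_ranks_add_one, hr]
  refine ⟨S, mem_powersetCard.2 ⟨val_le_iff.1 hle, hScard⟩, l.map S.indexIn,
    r.map (T \ S).indexIn,
    valid_add_one_iff.2 ⟨by simp [hl], by rw [ranks_map_indexIn rfl, hScard], hil.map_indexIn rfl⟩,
    valid_add_one_iff.2 ⟨by simp [hr], by rw [ranks_map_indexIn hcompl, hcomplcard],
      hir.map_indexIn hcompl⟩, ?_⟩
  rw [join, map_enumOf_map_indexIn rfl, map_enumOf_map_indexIn hcompl]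

lemma exists_join_equiv {t : RTree} (ht : t.Valid (i + j + 2))
    (hs : t.splitsInto (i + 1) (j + 1)) :
    ∃ S ∈ (Ioc 1 (i + j + 1)).powersetCard i, ∃ u v : RTree, u.Valid (i + 1) ∧
      v.Valid (j + 1) ∧ Equiv (join (Ioc 1 (i + j + 1)) S u v) t := by
  cases t with
  | leaf => exact hs.elim
  | node k l r =>
    obtain rfl := ht.root_eq_one
    rcases hs with ⟨hl, hr⟩ | ⟨hr, hl⟩
    · obtain ⟨S, hS, u, v, hu, hv, heq⟩ := exists_join_eq ht hl hr
      exact ⟨S, hS, u, v, hu, hv, heq ▸ .refl _⟩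
    · obtain ⟨S, hS, u, v, hu, hv, heq⟩ := exists_join_eq ht.swap hl hr
      exact ⟨S, hS, u, v, hu, hv, heq ▸ .swap (.refl r) (.refl l)⟩

abbrev ShapesWith (P : RTree → Prop) : Type :=
  {q : Quot Equiv // ∃ t : RTree, Quot.mk _ t = q ∧ P t}

noncomputable def joinShapes (i j : ℕ)
    (p : (Ioc 1 (i + j + 1)).powersetCard i × ShapesWith (Valid · (i + 1)) ×
      ShapesWith (Valid · (j + 1))) :
    ShapesWith fun t => t.Valid (i + j + 2) ∧ t.splitsInto (i + 1) (j + 1) :=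
  ⟨Quot.map₂ (join (Ioc 1 (i + j + 1)) p.1) (fun _ _ _ => (Equiv.refl _).join)
    (fun _ _ _ h => h.join (.refl _)) p.2.1.1 p.2.2.1, by
    obtain ⟨⟨S, hS⟩, ⟨_, u, rfl, hu⟩, ⟨_, v, rfl, hv⟩⟩ := p
    exact ⟨_, rfl, join_valid hS hu hv⟩⟩

lemma joinShapes_bijective (hij : i ≠ j) : Function.Bijective (joinShapes i j) := by
  constructor
  · rintro ⟨⟨S, hS⟩, ⟨_, u, rfl, hu⟩, ⟨_, v, rfl, hv⟩⟩
      ⟨⟨S', hS'⟩, ⟨_, u', rfl, hu'⟩, ⟨_, v', rfl, hv'⟩⟩ h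
    have hne : u.leaves ≠ v'.leaves := by rw [hu.1, hv'.1]; omega
    obtain ⟨hur, hvr⟩ := ranks_eq_Icc_card_of_valid hS hu hv
    obtain ⟨hur', hvr'⟩ := ranks_eq_Icc_card_of_valid hS' hu' hv'
    obtain ⟨rfl, hu, hv⟩ := eq_of_join_equiv_join (mk_eq_mk_iff.1 (congrArg Subtype.val h))
      hne hur hur' hvr hvr'
    simp [Quot.sound hu, Quot.sound hv]
  · rintro ⟨_, t, rfl, ht, hs⟩
    obtain ⟨S, hS, u, v, hu, hv, h⟩ := exists_join_equiv ht hs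
    exact ⟨⟨⟨S, hS⟩, ⟨_, u, rfl, hu⟩, ⟨_, v, rfl, hv⟩⟩, Subtype.ext (Quot.sound h)⟩

theorem card_shapesWith_valid_splitsInto (hij : i ≠ j) :
    Nat.card (ShapesWith fun t => t.Valid (i + j + 2) ∧ t.splitsInto (i + 1) (j + 1)) =
      (i + j).choose i * rankedCount (i + 1) * rankedCount (j + 1) := by
  rw [← Nat.card_eq_of_bijective _ (joinShapes_bijective hij), Nat.card_prod, Nat.card_prod,
    Nat.card_eq_finsetCard, card_powersetCard, Nat.card_Ioc, Nat.add_sub_cancel, mul_assoc]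
  rfl

end RTree

/-- For fixed `x ≥ 0` and `n > 2x`, the number of ranked unlabeled tree shapes with
`n+2` leaves whose root splits into subtrees with `x+1` and `n-x+1` leaves equals
`C(n, x) e_x e_{n-x}`, where `e_i = R_{i+1}` counts ranked unlabeled tree shapes with
`i` internal nodes. -/
theorem ranked_rootSplit_count (x n : ℕ) (hn : 2 * x < n) :
    Nat.card {q : Quot RTree.Equiv //
        ∃ t : RTree, Quot.mk _ t = q ∧ t.Valid (n + 2) ∧
          t.splitsInto (x + 1) (n - x + 1)} =
      n.choose x * rankedCount (x + 1) * rankedCount (n - x + 1) := by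
  obtain ⟨j, rfl⟩ := Nat.exists_eq_add_of_le (show x ≤ n by omega)
  rw [Nat.add_sub_cancel_left]
  exact RTree.card_shapesWith_valid_splitsInto (by omega)
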